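/- For the indicator integrand h(u) = 1_{[a,b]}(u)·id on [0,t] with 0 ≤ a < b ≤ t, the kernel evaluates as: 𝒦_g(h)(t,s) = g(b,s) − g(a,s) when s < a; 𝒦_g(h)(t,s) = g(b,s) when a ≤ s ≤ b (interpreting g(s,s) via the kernel formula h(s)g(t,s) + ∫_s^t (h(u)−h(s))g(du,s) = g(t,s) − (g(t,s) − g(b,s)) = g(b,s)); and 𝒦_g(h)(t,s) = 0 when s > b. -/

import Mathlib

/-!
On a uniform partition of `[s, t]`, the Riemann–Stieltjes sums of a step integrand
`1_S(u) • id` with `Iio c ⊆ S ⊆ Iic c` telescope to `g(x_m, s) - g(s, s)`, where `x_m` is the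
first partition point outside `S`. That point lies within one mesh width to the right of `c`,
so continuity of `g(·, s)` at `c` makes the sums converge to `g(c, s) - g(s, s)`. On `[s, t]`
the integrand `h(u) - h(s)` of the kernel is, depending on where `s` lies relative to `[a, b]`,
the step integrand for `Iic b` minus the one for `Iio a`, the step integrand for `Iic b` minus
`id`, or zero.
-/

open Filter

/-- The operator-valued Riemann–Stieltjes integral `∫_a^b f(u) g(du)`, realized as the
limit of Riemann–Stieltjes sums along uniform partitions of `[a, b]`. -/
noncomputable def rsInt {H₂ H₃ : Type*} [NormedAddCommGroup H₂] [NormedSpace ℝ H₂]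
    [NormedAddCommGroup H₃] [NormedSpace ℝ H₃]
    (f : ℝ → H₂ →L[ℝ] H₃) (g : ℝ → H₂ →L[ℝ] H₂) (a b : ℝ) : H₂ →L[ℝ] H₃ :=
  haveI : Nonempty (H₂ →L[ℝ] H₃) := ⟨0⟩
  limUnder atTop (fun n : ℕ =>
    ∑ i ∈ Finset.range n,
      (f (a + i * (b - a) / n)).comp
        (g (a + (i + 1) * (b - a) / n) - g (a + i * (b - a) / n)))

/-- The Volterra integration kernel
`𝒦_g(h)(t,s) = h(s) g(t,s) + ∫_s^t (h(u) − h(s)) g(du, s)`. -/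
noncomputable def volterraKernel {H₂ H₃ : Type*} [NormedAddCommGroup H₂] [NormedSpace ℝ H₂]
    [NormedAddCommGroup H₃] [NormedSpace ℝ H₃]
    (h : ℝ → H₂ →L[ℝ] H₃) (g : ℝ → ℝ → H₂ →L[ℝ] H₂) (t s : ℝ) : H₂ →L[ℝ] H₃ :=
  (h s).comp (g t s) + rsInt (fun u => h u - h s) (fun u => g u s) s t

open Finset Set Topology

namespace Nat

variable {p : ℕ → Prop} [DecidablePred p]

theorem filter_range_eq_range_count_of_antitone (hp : Antitone p) (n : ℕ) :
    (range n).filter p = range (count p n) := by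
  induction n with
  | zero => simp
  | succ n ih =>
    rw [range_add_one, filter_insert, count_succ]
    by_cases hn : p n
    · have hcount : count p n = n := count_of_forall fun i hi => hp hi.le hn
      rw [if_pos hn, if_pos hn, ih, hcount, range_add_one]
    · rw [if_neg hn, if_neg hn, add_zero, ih]

theorem sum_range_ite_sub_of_antitone {E : Type*} [AddCommGroup E] (hp : Antitone p)
    (F : ℕ → E) (n : ℕ) :
    ∑ i ∈ range n, (if p i then F (i + 1) - F i else 0) = F (count p n) - F 0 := by
  rw [← sum_filter, filter_range_eq_range_count_of_antitone hp, sum_range_sub]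

end Nat

section UniformPartition

variable {S : Set ℝ} {a b c : ℝ}

theorem isLowerSet_of_Iio_subset_of_subset_Iic (hIio : Iio c ⊆ S) (hIic : S ⊆ Iic c) :
    IsLowerSet S := by
  intro y x hxy hy
  rcases (hxy.trans (hIic hy)).lt_or_eq with hlt | heq
  · exact hIio hlt
  · rwa [le_antisymm hxy (heq ▸ hIic hy)]

theorem IsLowerSet.antitone_mem_uniform_partition (hS : IsLowerSet S) (hab : a ≤ b) (n : ℕ) :
    Antitone fun i : ℕ => a + i * (b - a) / n ∈ S := by
  intro i j hij hj
  refine hS ?_ hj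
  have := sub_nonneg.2 hab
  gcongr

theorem uniform_partition_mem_Icc (hab : a ≤ b) {n i : ℕ} (hi : i ≤ n) :
    a + i * (b - a) / n ∈ Icc a b := by
  have hba := sub_nonneg.2 hab
  have hle : i * (b - a) / n ≤ b - a :=
    div_le_of_le_mul₀ n.cast_nonneg hba (by rw [mul_comm]; gcongr)
  exact ⟨le_add_of_nonneg_right (by positivity), by linarith⟩

/-- The point indexed by the count is the first partition point outside `S`. -/
theorem uniform_partition_count_mem_Icc [DecidablePred (· ∈ S)] (hac : a ≤ c) (hcb : c ≤ b)
    (hIio : Iio c ⊆ S) (hIic : S ⊆ Iic c) {n : ℕ} (hn : 0 < n) :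
    a + Nat.count (fun i : ℕ => a + i * (b - a) / n ∈ S) n * (b - a) / n ∈
      Icc c (c + (b - a) / n) := by
  set x : ℕ → ℝ := fun i => a + i * (b - a) / n with hx
  set m := Nat.count (fun i => x i ∈ S) n
  have hanti := (isLowerSet_of_Iio_subset_of_subset_Iic hIio hIic).antitone_mem_uniform_partition
    (hac.trans hcb) n
  have hiff (i : ℕ) (hi : i < n) : x i ∈ S ↔ i < m := by
    simpa [hi] using congrArg (i ∈ ·) (Nat.filter_range_eq_range_count_of_antitone hanti n)
  have hmn : m ≤ n := Nat.count_le _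
  constructor
  · rcases hmn.lt_or_eq with hlt | heq
    · exact not_lt.1 fun h => lt_irrefl m ((hiff m hlt).1 (hIio h))
    · rw [heq]
      field_simp
      linarith
  · rcases h : m with _ | k
    · have : 0 ≤ (b - a) / n := by have := sub_nonneg.2 (hac.trans hcb); positivity
      simp only [Nat.cast_zero, zero_mul, zero_div, add_zero]
      linarith
    · have hk : x k ≤ c := hIic ((hiff k (by omega)).2 (by omega))
      have hstep : x (k + 1) = x k + (b - a) / n := by simp only [hx]; push_cast; ring
      exact hstep.trans_le (by linarith)

theorem tendsto_sum_indicator_smul_uniform_partition {E : Type*} [NormedAddCommGroup E]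
    [NormedSpace ℝ E] {G : ℝ → E} (hac : a ≤ c) (hcb : c ≤ b) (hIio : Iio c ⊆ S)
    (hIic : S ⊆ Iic c) (hG : ContinuousAt G c) :
    Tendsto (fun n : ℕ => ∑ i ∈ range n, S.indicator (fun _ => (1 : ℝ)) (a + i * (b - a) / n) •
        (G (a + (i + 1) * (b - a) / n) - G (a + i * (b - a) / n)))
      atTop (𝓝 (G c - G a)) := by
  classical
  set m : ℕ → ℕ := fun n => Nat.count (fun i : ℕ => a + i * (b - a) / n ∈ S) n
  have hxm : Tendsto (fun n : ℕ => a + m n * (b - a) / n) atTop (𝓝 c) := by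
    refine tendsto_of_tendsto_of_tendsto_of_le_of_le' tendsto_const_nhds
      (by simpa using tendsto_const_nhds.add (tendsto_const_div_atTop_nhds_zero_nat (b - a)))
      ?_ ?_
    · filter_upwards [eventually_gt_atTop 0] with n hn
        using (uniform_partition_count_mem_Icc hac hcb hIio hIic hn).1
    · filter_upwards [eventually_gt_atTop 0] with n hn
        using (uniform_partition_count_mem_Icc hac hcb hIio hIic hn).2
  refine ((hG.tendsto.comp hxm).sub_const (G a)).congr fun n => ?_
  have htele := Nat.sum_range_ite_sub_of_antitone
    ((isLowerSet_of_Iio_subset_of_subset_Iic hIio hIic).antitone_mem_uniform_partition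
      (hac.trans hcb) n)
    (fun i : ℕ => G (a + i * (b - a) / n)) n
  simp only [Nat.cast_add, Nat.cast_one, Nat.cast_zero, zero_mul, zero_div, add_zero] at htele
  simp only [Function.comp_apply, indicator_apply, ite_smul, one_smul, zero_smul]
  exact htele.symm

end UniformPartition

section RiemannStieltjesSums

variable {H₂ H₃ : Type*} [NormedAddCommGroup H₂] [NormedSpace ℝ H₂]
  [NormedAddCommGroup H₃] [NormedSpace ℝ H₃]

noncomputable def rsSum (f : ℝ → H₂ →L[ℝ] H₃) (g : ℝ → H₂ →L[ℝ] H₂) (a b : ℝ) (n : ℕ) :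
    H₂ →L[ℝ] H₃ :=
  ∑ i ∈ range n,
    (f (a + i * (b - a) / n)).comp (g (a + (i + 1) * (b - a) / n) - g (a + i * (b - a) / n))

variable {f f' : ℝ → H₂ →L[ℝ] H₃} {g : ℝ → H₂ →L[ℝ] H₂} {a b : ℝ}

theorem rsSum_congr (hab : a ≤ b) (hf : EqOn f f' (Icc a b)) :
    rsSum f g a b = rsSum f' g a b := by
  funext n
  refine sum_congr rfl fun i hi => ?_
  rw [hf (uniform_partition_mem_Icc hab (mem_range.1 hi).le)]

theorem rsInt_eq_of_eqOn_of_tendsto (hab : a ≤ b) (hf : EqOn f f' (Icc a b)) {L : H₂ →L[ℝ] H₃}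
    (h : Tendsto (rsSum f' g a b) atTop (𝓝 L)) : rsInt f g a b = L := by
  rw [← rsSum_congr hab hf] at h
  exact h.limUnder_eq

theorem Filter.Tendsto.rsSum_sub {L L' : H₂ →L[ℝ] H₃} (hf : Tendsto (rsSum f g a b) atTop (𝓝 L))
    (hf' : Tendsto (rsSum f' g a b) atTop (𝓝 L')) :
    Tendsto (rsSum (fun u => f u - f' u) g a b) atTop (𝓝 (L - L')) := by
  convert hf.sub hf' using 1
  funext n
  simp only [rsSum, ContinuousLinearMap.sub_comp, sum_sub_distrib]

theorem tendsto_rsSum_const (L : H₂ →L[ℝ] H₃) :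
    Tendsto (rsSum (fun _ => L) g a b) atTop (𝓝 (L.comp (g b - g a))) := by
  refine tendsto_const_nhds.congr' ?_
  filter_upwards [eventually_ne_atTop 0] with n hn
  have htele := sum_range_sub (fun i : ℕ => g (a + i * (b - a) / n)) n
  push_cast at htele
  rw [rsSum, ← ContinuousLinearMap.comp_finsetSum, htele,
    mul_div_cancel_left₀ _ (Nat.cast_ne_zero.2 hn), zero_mul, zero_div, add_zero, add_sub_cancel]

end RiemannStieltjesSums

section IndicatorIntegrand

variable {H : Type*} [NormedAddCommGroup H] [NormedSpace ℝ H]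

variable (H) in
noncomputable def indicatorId (S : Set ℝ) (u : ℝ) : H →L[ℝ] H :=
  S.indicator (fun _ => (1 : ℝ)) u • ContinuousLinearMap.id ℝ H

variable {S : Set ℝ} {u a b : ℝ}

theorem indicatorId_of_mem (hu : u ∈ S) : indicatorId H S u = ContinuousLinearMap.id ℝ H := by
  simp [indicatorId, hu]

theorem indicatorId_of_notMem (hu : u ∉ S) : indicatorId H S u = 0 := by
  simp [indicatorId, hu]

theorem indicatorId_Icc (hab : a ≤ b) :
    indicatorId H (Icc a b) u = indicatorId H (Iic b) u - indicatorId H (Iio a) u := by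
  have hIcc : Icc a b = Iic b \ Iio a := by ext; simp
  simp only [indicatorId, hIcc, indicator_sdiff (Iio_subset_Iic_iff.2 hab), Pi.sub_apply,
    sub_smul]

theorem tendsto_rsSum_indicatorId {g : ℝ → H →L[ℝ] H} {c : ℝ} (hac : a ≤ c) (hcb : c ≤ b)
    (hIio : Iio c ⊆ S) (hIic : S ⊆ Iic c) (hg : ContinuousAt g c) :
    Tendsto (rsSum (indicatorId H S) g a b) atTop (𝓝 (g c - g a)) := by
  convert tendsto_sum_indicator_smul_uniform_partition hac hcb hIio hIic hg using 2 with n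
  simp only [rsSum, indicatorId, ContinuousLinearMap.smul_comp, ContinuousLinearMap.id_comp]

variable {g : ℝ → ℝ → H →L[ℝ] H} {t s : ℝ}

theorem volterraKernel_indicatorId_Icc_of_lt (hsa : s < a) (hab : a ≤ b) (hbt : b ≤ t)
    (hga : ContinuousAt (fun u => g u s) a) (hgb : ContinuousAt (fun u => g u s) b) :
    volterraKernel (indicatorId H (Icc a b)) g t s = g b s - g a s := by
  have hs : indicatorId H (Icc a b) s = 0 := indicatorId_of_notMem fun h => hsa.not_ge h.1
  have hstep : EqOn (fun u => indicatorId H (Icc a b) u - indicatorId H (Icc a b) s)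
      (fun u => indicatorId H (Iic b) u - indicatorId H (Iio a) u) (Icc s t) := fun u _ => by
    simp only [hs, sub_zero, indicatorId_Icc hab]
  have hlim := (tendsto_rsSum_indicatorId (S := Iic b) (hsa.le.trans hab) hbt
      Iio_subset_Iic_self subset_rfl hgb).rsSum_sub
    (tendsto_rsSum_indicatorId (S := Iio a) hsa.le (hab.trans hbt) subset_rfl
      Iio_subset_Iic_self hga)
  rw [volterraKernel, rsInt_eq_of_eqOn_of_tendsto (hsa.le.trans (hab.trans hbt)) hstep hlim, hs,
    ContinuousLinearMap.zero_comp, zero_add, sub_sub_sub_cancel_right]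

theorem volterraKernel_indicatorId_Icc_of_mem (has : a ≤ s) (hsb : s ≤ b) (hbt : b ≤ t)
    (hgb : ContinuousAt (fun u => g u s) b) :
    volterraKernel (indicatorId H (Icc a b)) g t s = g b s := by
  have hs : indicatorId H (Icc a b) s = ContinuousLinearMap.id ℝ H :=
    indicatorId_of_mem ⟨has, hsb⟩
  have hstep : EqOn (fun u => indicatorId H (Icc a b) u - indicatorId H (Icc a b) s)
      (fun u => indicatorId H (Iic b) u - ContinuousLinearMap.id ℝ H) (Icc s t) := fun u hu => by
    simp only [hs, indicatorId_Icc (has.trans hsb),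
      indicatorId_of_notMem (notMem_Iio.2 (has.trans hu.1)), sub_zero]
  have hlim := (tendsto_rsSum_indicatorId (S := Iic b) hsb hbt Iio_subset_Iic_self subset_rfl
    hgb).rsSum_sub (tendsto_rsSum_const (ContinuousLinearMap.id ℝ H))
  rw [volterraKernel, rsInt_eq_of_eqOn_of_tendsto (hsb.trans hbt) hstep hlim, hs]
  simp only [ContinuousLinearMap.id_comp]
  abel

theorem volterraKernel_indicatorId_Icc_of_gt (hbs : b < s) (hst : s ≤ t) :
    volterraKernel (indicatorId H (Icc a b)) g t s = 0 := by
  have hzero {u : ℝ} (hsu : s ≤ u) : indicatorId H (Icc a b) u = 0 :=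
    indicatorId_of_notMem fun h => (hbs.trans_le hsu).not_ge h.2
  rw [volterraKernel, hzero le_rfl, rsInt_eq_of_eqOn_of_tendsto hst (f' := fun _ => 0)
    (fun u hu => by simp only [hzero hu.1, sub_zero]) (tendsto_rsSum_const 0)]
  simp only [ContinuousLinearMap.zero_comp, add_zero]

end IndicatorIntegrand

theorem volterraKernel_indicator_general
    {H₂ : Type*} [NormedAddCommGroup H₂] [InnerProductSpace ℝ H₂]
    (t a b : ℝ) (hab : a < b) (hbt : b ≤ t)
    (g : ℝ → ℝ → H₂ →L[ℝ] H₂) :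
    ∀ s : ℝ, 0 ≤ s → s ≤ t →
      BoundedVariationOn (fun u => g u s) (Set.Icc s t) →
      ContinuousAt (fun u => g u s) a → ContinuousAt (fun u => g u s) b →
      ((s < a → volterraKernel
          (fun u => Set.indicator (Set.Icc a b) (fun _ => (1 : ℝ)) u •
            ContinuousLinearMap.id ℝ H₂) g t s = g b s - g a s) ∧
       (a ≤ s → s ≤ b → volterraKernel
          (fun u => Set.indicator (Set.Icc a b) (fun _ => (1 : ℝ)) u •
            ContinuousLinearMap.id ℝ H₂) g t s = g b s) ∧
       (b < s → volterraKernel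
          (fun u => Set.indicator (Set.Icc a b) (fun _ => (1 : ℝ)) u •
            ContinuousLinearMap.id ℝ H₂) g t s = 0)) :=
  fun _ _ hst _ hga hgb =>
    ⟨fun hsa => volterraKernel_indicatorId_Icc_of_lt hsa hab.le hbt hga hgb,
      fun has hsb => volterraKernel_indicatorId_Icc_of_mem has hsb hbt hgb,
      fun hbs => volterraKernel_indicatorId_Icc_of_gt hbs hst⟩

/-- For the indicator integrand `h(u) = 1_{[a,b]}(u) • id` on `[0,t]` with
`0 ≤ a < b ≤ t`, the kernel evaluates as: `g(b,s) − g(a,s)` when `s < a`;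
`g(b,s)` when `a ≤ s ≤ b`; and `0` when `s > b`. -/
theorem volterraKernel_indicator
    {H₂ : Type*} [NormedAddCommGroup H₂] [InnerProductSpace ℝ H₂] [CompleteSpace H₂]
    [TopologicalSpace.SeparableSpace H₂]
    (T t a b : ℝ) (ha : 0 ≤ a) (hab : a < b) (hbt : b ≤ t) (htT : t ≤ T)
    (g : ℝ → ℝ → H₂ →L[ℝ] H₂) :
    ∀ s : ℝ, 0 ≤ s → s ≤ t →
      BoundedVariationOn (fun u => g u s) (Set.Icc s t) →
      ContinuousAt (fun u => g u s) a → ContinuousAt (fun u => g u s) b →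
      ((s < a → volterraKernel
          (fun u => Set.indicator (Set.Icc a b) (fun _ => (1 : ℝ)) u •
            ContinuousLinearMap.id ℝ H₂) g t s = g b s - g a s) ∧
       (a ≤ s → s ≤ b → volterraKernel
          (fun u => Set.indicator (Set.Icc a b) (fun _ => (1 : ℝ)) u •
            ContinuousLinearMap.id ℝ H₂) g t s = g b s) ∧
       (b < s → volterraKernel
          (fun u => Set.indicator (Set.Icc a b) (fun _ => (1 : ℝ)) u •
            ContinuousLinearMap.id ℝ H₂) g t s = 0)) :=
  volterraKernel_indicator_general t a b hab hbt g
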